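/- arXiv:2312.02693 — 4 statements merged into one kernel-verified Lean document; each statement's English description precedes it below -/
import Mathlib

section
/- Let A and B be bounded operators with closed range on a Hilbert space H, with Moore-Penrose inverses A† and B†. Then A† − B† = −A†(A−B)B† + (A*A)†(A* − B*)(I − BB†) + (I − A†A)(A* − B*)(BB*)†. -/
open ContinuousLinearMap Filter MeasureTheory
open scoped InnerProductSpace

noncomputable section

variable {H : Type*} [NormedAddCommGroup H] [InnerProductSpace ℂ H] [CompleteSpace H]

/-- `B` is the Moore-Penrose inverse of `A`. -/
def IsMP (A B : H →L[ℂ] H) : Prop :=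
  A * B * A = A ∧ B * A * B = B ∧ IsSelfAdjoint (A * B) ∧ IsSelfAdjoint (B * A)

/-! Uniqueness of Moore-Penrose inverses gives `(A*A)† = A†A†*` and `(BB*)† = B†*B†`. After these
substitutions the identity holds in any ring, once the four absorption laws `A†A†*A* = A†`,
`A†AA* = A*`, `B*BB† = B*` and `B*B†*B† = B†` are available. -/

/-- Read `d = a†`, `e = b†` and `a' d' b' e'` as the adjoints of
`a d b e`, so that `d * d'` and `e' * e` stand for `(a* a)†` and `(b b*)†`. -/
theorem sub_eq_wedin_of_relations {R : Type*} [Ring R] {a b d e a' b' d' e' : R}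
    (hd : d * d' * a' = d) (ha' : d * a * a' = a') (hb' : b' * b * e = b')
    (he : b' * e' * e = e) :
    d - e = -(d * (a - b) * e) + d * d' * (a' - b') * (1 - b * e)
      + (1 - d * a) * (a' - b') * (e' * e) := by
  linear_combination (norm := noncomm_ring) -hd + hd * (b * e) - d * d' * hb' + ha' * (e' * e)
    - d * a * he + he

namespace IsMP

variable {A B D : H →L[ℂ] H}

theorem unique (hB : IsMP A B) (hD : IsMP A D) : B = D := by
  obtain ⟨hABA, hBAB, hAB, hBA⟩ := hB
  obtain ⟨hADA, hDAD, hAD, hDA⟩ := hD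
  have hAB_eq : A * B = A * D := by
    calc A * B = star (A * D * A * B) := by rw [hADA, hAB.star_eq]
      _ = star (A * B) * star (A * D) := by rw [← star_mul, mul_assoc (A * D)]
      _ = A * D := by rw [hAB.star_eq, hAD.star_eq, ← mul_assoc, hABA]
  have hBA_eq : B * A = D * A := by
    calc B * A = star (B * A) * star (D * A) := by
          rw [hBA.star_eq, hDA.star_eq, mul_assoc, ← mul_assoc A, hADA]
      _ = star (D * (A * B * A)) := by rw [← star_mul, mul_assoc, ← mul_assoc A]
      _ = D * A := by rw [hABA, hDA.star_eq]
  calc B = B * A * B := hBAB.symm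
    _ = D * A * D := by rw [hBA_eq, mul_assoc, hAB_eq, ← mul_assoc]
    _ = D := hDAD

protected theorem star (h : IsMP A D) : IsMP (star A) (star D) := by
  obtain ⟨hADA, hDAD, hAD, hDA⟩ := h
  refine ⟨?_, ?_, ?_, ?_⟩
  · rw [← star_mul, ← star_mul, ← mul_assoc, hADA]
  · rw [← star_mul, ← star_mul, ← mul_assoc, hDAD]
  · rw [← star_mul]; exact IsSelfAdjoint.star_iff.mpr hDA
  · rw [← star_mul]; exact IsSelfAdjoint.star_iff.mpr hAD

theorem mul_star_mul (h : IsMP A D) : D * star D * star A = D := by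
  rw [mul_assoc, ← star_mul, h.2.2.1.star_eq, ← mul_assoc, h.2.1]

theorem mul_mul_star (h : IsMP A D) : D * A * star A = star A := by
  rw [← h.2.2.2.star_eq, ← star_mul, ← mul_assoc, h.1]

theorem star_mul_mul (h : IsMP A D) : star A * A * D = star A := by
  simpa [mul_assoc] using congrArg star h.star.mul_mul_star

theorem star_mul_star_mul (h : IsMP A D) : star A * star D * D = D := by
  simpa [mul_assoc] using congrArg star h.star.mul_star_mul

theorem star_mul_self (h : IsMP A D) : IsMP (star A * A) (D * star D) := by
  have hXY : star A * A * (D * star D) = D * A := by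
    rw [← mul_assoc, h.star_mul_mul, ← star_mul, h.2.2.2.star_eq]
  have hYX : D * star D * (star A * A) = D * A := by
    rw [← mul_assoc, h.mul_star_mul]
  refine ⟨?_, ?_, ?_, ?_⟩
  · rw [hXY, ← mul_assoc, h.mul_mul_star]
  · rw [hYX, ← mul_assoc, h.2.1]
  · rw [hXY]; exact h.2.2.2
  · rw [hYX]; exact h.2.2.2

theorem mul_star_self (h : IsMP A D) : IsMP (A * star A) (star D * D) := by
  simpa using h.star.star_mul_self

end IsMP

theorem wedin_identity_general (A B Adag Bdag AsAdag BBsdag : H →L[ℂ] H)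
    (hA : IsMP A Adag) (hB : IsMP B Bdag)
    (hAsA : IsMP (adjoint A * A) AsAdag)
    (hBBs : IsMP (B * adjoint B) BBsdag) :
    Adag - Bdag = -(Adag * (A - B) * Bdag)
      + AsAdag * (adjoint A - adjoint B) * (1 - B * Bdag)
      + (1 - Adag * A) * (adjoint A - adjoint B) * BBsdag := by
  simp only [← star_eq_adjoint] at hAsA hBBs ⊢
  rw [hAsA.unique hA.star_mul_self, hBBs.unique hB.mul_star_self]
  exact sub_eq_wedin_of_relations hA.mul_star_mul hA.mul_mul_star hB.star_mul_mul
    hB.star_mul_star_mul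

theorem wedin_identity (A B Adag Bdag AsAdag BBsdag : H →L[ℂ] H)
    (hAcr : IsClosed (LinearMap.range (A : H →ₗ[ℂ] H) : Set H))
    (hBcr : IsClosed (LinearMap.range (B : H →ₗ[ℂ] H) : Set H))
    (hA : IsMP A Adag) (hB : IsMP B Bdag)
    (hAsA : IsMP (adjoint A * A) AsAdag)
    (hBBs : IsMP (B * adjoint B) BBsdag) :
    Adag - Bdag = -(Adag * (A - B) * Bdag)
      + AsAdag * (adjoint A - adjoint B) * (1 - B * Bdag)
      + (1 - Adag * A) * (adjoint A - adjoint B) * BBsdag :=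
  wedin_identity_general A B Adag Bdag AsAdag BBsdag hA hB hAsA hBBs
end
end

section
/- Let A, B be complex matrices of the same size with rank(A) = rank(B) and ‖A − B‖ < ‖A†‖⁻¹ (operator norm). Then ‖B†‖ ≤ ‖A†‖ / (1 − ‖A†‖·‖A − B‖). -/
open ContinuousLinearMap

noncomputable section

/-- `B` is the Moore-Penrose inverse of `A` (operators between Euclidean spaces). -/
def IsMPMat {m n : ℕ} (A : EuclideanSpace ℂ (Fin n) →L[ℂ] EuclideanSpace ℂ (Fin m))
    (B : EuclideanSpace ℂ (Fin m) →L[ℂ] EuclideanSpace ℂ (Fin n)) : Prop :=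
  A ∘L B ∘L A = A ∧ B ∘L A ∘L B = B ∧ IsSelfAdjoint (A ∘L B) ∧ IsSelfAdjoint (B ∘L A)

/-!
Write `r` for the common rank. The bound is Weyl's inequality `σ_r(B) ≥ σ_r(A) - ‖A - B‖` for the
smallest nonzero singular value `σ_r = ‖·†‖⁻¹`, proved by a dimension count. `A` is bounded below
by `‖A†‖⁻¹` on the `r`-dimensional space `range A†`, while `B` is bounded above by `‖B†‖⁻¹` on the
`(n - r + 1)`-dimensional space `ker B ⊕ ℂ ∙ B† x`, where `‖x‖ ≤ 1` and `‖B† x‖ = ‖B†‖`: indeed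
`B† x ⟂ ker B` and `‖B B† x‖ ≤ 1` because `B B†` is an orthogonal projection. The two spaces meet in
some `w ≠ 0`, and `‖w‖ / ‖A†‖ ≤ ‖A w‖ ≤ ‖B w‖ + ‖A - B‖ ‖w‖ ≤ (‖B†‖⁻¹ + ‖A - B‖) ‖w‖`.
-/

open Module Submodule

lemma Submodule.inf_ne_bot_of_finrank_lt_add {K V : Type*} [DivisionRing K] [AddCommGroup V]
    [Module K V] [FiniteDimensional K V] {s t : Submodule K V}
    (h : finrank K V < finrank K s + finrank K t) : s ⊓ t ≠ ⊥ := by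
  intro hst
  have := finrank_sup_add_finrank_inf_eq s t
  rw [hst, finrank_bot] at this
  have := (s ⊔ t).finrank_le
  omega

lemma LinearMap.finrank_range_le_of_comp_comp_eq {K V V' : Type*} [DivisionRing K]
    [AddCommGroup V] [Module K V] [AddCommGroup V'] [Module K V'] [FiniteDimensional K V]
    {f : V →ₗ[K] V'} {g : V' →ₗ[K] V} (h : f ∘ₗ g ∘ₗ f = f) :
    finrank K (LinearMap.range f) ≤ finrank K (LinearMap.range g) :=
  calc finrank K (LinearMap.range f) = finrank K (LinearMap.range (f ∘ₗ g ∘ₗ f)) := by rw [h]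
    _ ≤ finrank K (LinearMap.range (g ∘ₗ f)) := by
      rw [LinearMap.range_comp]; exact finrank_map_le _ _
    _ ≤ finrank K (LinearMap.range g) := finrank_mono (LinearMap.range_comp_le_range _ _)

lemma LinearMap.finrank_range_eq_of_comp_comp_eq {K V V' : Type*} [DivisionRing K]
    [AddCommGroup V] [Module K V] [AddCommGroup V'] [Module K V'] [FiniteDimensional K V]
    [FiniteDimensional K V'] {f : V →ₗ[K] V'} {g : V' →ₗ[K] V} (hf : f ∘ₗ g ∘ₗ f = f)
    (hg : g ∘ₗ f ∘ₗ g = g) :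
    finrank K (LinearMap.range f) = finrank K (LinearMap.range g) :=
  (finrank_range_le_of_comp_comp_eq hf).antisymm (finrank_range_le_of_comp_comp_eq hg)

lemma ContinuousLinearMap.exists_norm_le_one_norm_apply_eq_opNorm {𝕜 E F : Type*}
    [DenselyNormedField 𝕜] [NormedAddCommGroup E] [NormedSpace 𝕜 E] [ProperSpace E]
    [NormedAddCommGroup F] [NormedSpace 𝕜 F] (f : E →L[𝕜] F) :
    ∃ x, ‖x‖ ≤ 1 ∧ ‖f x‖ = ‖f‖ := by
  have hc : IsCompact ((fun x => ‖f x‖) '' Metric.closedBall 0 1) :=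
    (isCompact_closedBall 0 1).image (by fun_prop)
  obtain ⟨x, hx, hfx⟩ := f.sSup_unitClosedBall_eq_norm ▸
    hc.sSup_mem ((Metric.nonempty_closedBall.mpr zero_le_one).image _)
  exact ⟨x, mem_closedBall_zero_iff.mp hx, hfx⟩

section Normed

variable {𝕜 E F : Type*} [NontriviallyNormedField 𝕜] [NormedAddCommGroup E] [NormedSpace 𝕜 E]
  [NormedAddCommGroup F] [NormedSpace 𝕜 F]

lemma norm_le_opNorm_mul_norm_apply_of_mem_range {A : E →L[𝕜] F} {Adag : F →L[𝕜] E}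
    (h : Adag ∘L A ∘L Adag = Adag) {w : E} (hw : w ∈ LinearMap.range (Adag : F →ₗ[𝕜] E)) :
    ‖w‖ ≤ ‖Adag‖ * ‖A w‖ := by
  obtain ⟨y, rfl⟩ := hw
  calc ‖Adag y‖ = ‖Adag (A (Adag y))‖ := by
        rw [show Adag (A (Adag y)) = Adag y from DFunLike.congr_fun h y]
    _ ≤ ‖Adag‖ * ‖A (Adag y)‖ := Adag.le_opNorm _

lemma mul_one_sub_mul_norm_sub_le_of_inf_ne_bot {A B : E →L[𝕜] F} {S W : Submodule 𝕜 E}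
    {α β : ℝ} (hα : 0 ≤ α) (hβ : 0 ≤ β) (hS : ∀ w ∈ S, ‖w‖ ≤ α * ‖A w‖)
    (hW : ∀ w ∈ W, β * ‖B w‖ ≤ ‖w‖) (hSW : S ⊓ W ≠ ⊥) : β * (1 - α * ‖A - B‖) ≤ α := by
  obtain ⟨w, ⟨hwS, hwW⟩, hw⟩ := (Submodule.ne_bot_iff _).mp hSW
  have hAw : ‖A w‖ ≤ ‖B w‖ + ‖A - B‖ * ‖w‖ := by
    calc ‖A w‖ = ‖B w + (A - B) w‖ := by simp
      _ ≤ ‖B w‖ + ‖A - B‖ * ‖w‖ := norm_add_le_of_le le_rfl ((A - B).le_opNorm w)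
  have : β * ‖w‖ ≤ (α + α * β * ‖A - B‖) * ‖w‖ :=
    calc β * ‖w‖ ≤ β * (α * (‖B w‖ + ‖A - B‖ * ‖w‖)) := by gcongr; exact (hS w hwS).trans (by gcongr)
      _ = α * (β * ‖B w‖) + α * β * ‖A - B‖ * ‖w‖ := by ring
      _ ≤ α * ‖w‖ + α * β * ‖A - B‖ * ‖w‖ := by gcongr; exact hW w hwW
      _ = (α + α * β * ‖A - B‖) * ‖w‖ := by ring
  nlinarith [le_of_mul_le_mul_right this (norm_pos_iff.mpr hw)]

end Normed

section Inner

variable {𝕜 E F : Type*} [RCLike 𝕜] [NormedAddCommGroup E] [InnerProductSpace 𝕜 E]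
  [NormedAddCommGroup F] [InnerProductSpace 𝕜 F]

lemma inner_apply_eq_zero_of_apply_eq_zero [CompleteSpace E] {B : E →L[𝕜] F} {Bdag : F →L[𝕜] E}
    (h₁ : Bdag ∘L B ∘L Bdag = Bdag) (h₂ : IsSelfAdjoint (Bdag ∘L B)) {k : E} (hk : B k = 0)
    (y : F) : inner 𝕜 k (Bdag y) = 0 := by
  calc inner 𝕜 k (Bdag y) = inner 𝕜 k ((Bdag ∘L B) (Bdag y)) := by
        rw [show (Bdag ∘L B) (Bdag y) = Bdag y from DFunLike.congr_fun h₁ y]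
    _ = inner 𝕜 ((Bdag ∘L B) k) (Bdag y) := by
        rw [← adjoint_inner_left, isSelfAdjoint_iff'.mp h₂]
    _ = 0 := by simp [hk]

lemma exists_finrank_ker_lt_forall_mul_norm_apply_le [FiniteDimensional 𝕜 E] [CompleteSpace E]
    [ProperSpace F] {B : E →L[𝕜] F} {Bdag : F →L[𝕜] E}
    (h₁ : Bdag ∘L B ∘L Bdag = Bdag) (h₂ : IsSelfAdjoint (B ∘L Bdag))
    (h₃ : IsSelfAdjoint (Bdag ∘L B)) (hBdag : Bdag ≠ 0) :
    ∃ W : Submodule 𝕜 E, finrank 𝕜 (LinearMap.ker (B : E →ₗ[𝕜] F)) < finrank 𝕜 W ∧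
      ∀ w ∈ W, ‖Bdag‖ * ‖B w‖ ≤ ‖w‖ := by
  obtain ⟨x, hx, hBdag_x⟩ := Bdag.exists_norm_le_one_norm_apply_eq_opNorm
  have hBv : ‖B (Bdag x)‖ ≤ 1 :=
    calc ‖(B ∘L Bdag) x‖ ≤ ‖B ∘L Bdag‖ * ‖x‖ := le_opNorm _ _
      _ ≤ 1 * 1 := by
        gcongr
        refine IsStarProjection.norm_le _ ⟨?_, h₂⟩
        exact (comp_assoc _ _ _).trans (congrArg (B ∘L ·) h₁)
      _ = 1 := one_mul 1
  have hv : Bdag x ∉ LinearMap.ker (B : E →ₗ[𝕜] F) := fun hker => by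
    have hBx : B (Bdag x) = 0 := hker
    have : Bdag x = 0 := by
      rw [← show Bdag (B (Bdag x)) = Bdag x from DFunLike.congr_fun h₁ x, hBx, map_zero]
    exact hBdag (norm_eq_zero.mp (by rw [← hBdag_x, this, norm_zero]))
  refine ⟨_ ⊔ span 𝕜 {Bdag x}, by rw [finrank_sup_span_singleton hv]; omega, ?_⟩
  intro w hw
  obtain ⟨k, hk, _, hc, rfl⟩ := mem_sup.mp hw
  obtain ⟨c, rfl⟩ := mem_span_singleton.mp hc
  have hBk : B k = 0 := hk
  have hck : inner 𝕜 k (c • Bdag x) = 0 := by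
    rw [inner_smul_right, inner_apply_eq_zero_of_apply_eq_zero h₁ h₃ hBk, mul_zero]
  calc ‖Bdag‖ * ‖B (k + c • Bdag x)‖ = ‖c‖ * ‖Bdag‖ * ‖B (Bdag x)‖ := by
        rw [map_add, hBk, zero_add, map_smul, norm_smul]; ring
    _ ≤ ‖c • Bdag x‖ := by
        rw [norm_smul, hBdag_x]
        exact mul_le_of_le_one_right (by positivity) hBv
    _ ≤ ‖k + c • Bdag x‖ := by
        have := norm_add_sq_eq_norm_sq_add_norm_sq_of_inner_eq_zero k (c • Bdag x) hck
        nlinarith [norm_nonneg (k + c • Bdag x), norm_nonneg (c • Bdag x), mul_self_nonneg ‖k‖]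

end Inner

theorem wedin_rank_bound {m n : ℕ}
    (A B : EuclideanSpace ℂ (Fin n) →L[ℂ] EuclideanSpace ℂ (Fin m))
    (Adag Bdag : EuclideanSpace ℂ (Fin m) →L[ℂ] EuclideanSpace ℂ (Fin n))
    (hA : IsMPMat A Adag) (hB : IsMPMat B Bdag)
    (hrank : Module.finrank ℂ (LinearMap.range (A : EuclideanSpace ℂ (Fin n) →ₗ[ℂ] EuclideanSpace ℂ (Fin m))) = Module.finrank ℂ (LinearMap.range (B : EuclideanSpace ℂ (Fin n) →ₗ[ℂ] EuclideanSpace ℂ (Fin m))))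
    (hlt : ‖A - B‖ < ‖Adag‖⁻¹) :
    ‖Bdag‖ ≤ ‖Adag‖ / (1 - ‖Adag‖ * ‖A - B‖) := by
  obtain ⟨hA₁, hA₂, -, -⟩ := hA
  obtain ⟨-, hB₂, hB₃, hB₄⟩ := hB
  have hAdag : 0 < ‖Adag‖ := (norm_nonneg _).lt_of_ne fun h => by
    rw [← h, inv_zero] at hlt
    exact (norm_nonneg _).not_gt hlt
  have hden : 0 < 1 - ‖Adag‖ * ‖A - B‖ := by
    have := mul_lt_mul_of_pos_left hlt hAdag
    rw [mul_inv_cancel₀ hAdag.ne'] at this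
    linarith
  rw [le_div_iff₀ hden]
  rcases eq_or_ne Bdag 0 with rfl | hBdag
  · simp
  obtain ⟨W, hW, hBW⟩ := exists_finrank_ker_lt_forall_mul_norm_apply_le hB₂ hB₃ hB₄ hBdag
  refine mul_one_sub_mul_norm_sub_le_of_inf_ne_bot (norm_nonneg _) (norm_nonneg _)
    (fun w hw => norm_le_opNorm_mul_norm_apply_of_mem_range hA₂ hw) hBW
    (Submodule.inf_ne_bot_of_finrank_lt_add ?_)
  have hrankAdag := LinearMap.finrank_range_eq_of_comp_comp_eq
    (congrArg ContinuousLinearMap.toLinearMap hA₁) (congrArg ContinuousLinearMap.toLinearMap hA₂)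
  have hnullity := LinearMap.finrank_range_add_finrank_ker
    (B : EuclideanSpace ℂ (Fin n) →ₗ[ℂ] EuclideanSpace ℂ (Fin m))
  omega
end
end

section
/- Let S be a symmetrically-normed ideal on a Hilbert space and A, B closed range bounded operators with A − B ∈ S. Then A† − B† ∈ S, P_{ran A} − P_{ran B} ∈ S, and P_{ker A} − P_{ker B} ∈ S. -/
open ContinuousLinearMap Filter MeasureTheory
open scoped InnerProductSpace

noncomputable section

variable {H : Type*} [NormedAddCommGroup H] [InnerProductSpace ℂ H] [CompleteSpace H]

/-- A symmetrically-normed ideal of bounded operators on `H`. -/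
structure SymmIdeal (H : Type*) [NormedAddCommGroup H] [InnerProductSpace ℂ H]
    [CompleteSpace H] where
  mem : (H →L[ℂ] H) → Prop
  snorm : (H →L[ℂ] H) → ℝ
  zero_mem : mem 0
  neg_mem : ∀ {X}, mem X → mem (-X)
  add_mem : ∀ {X Y}, mem X → mem Y → mem (X + Y)
  smul_mem : ∀ (c : ℂ) {X}, mem X → mem (c • X)
  mul_mem_left : ∀ (A : H →L[ℂ] H) {X}, mem X → mem (A * X)
  mul_mem_right : ∀ (A : H →L[ℂ] H) {X}, mem X → mem (X * A)
  snorm_nonneg : ∀ X, 0 ≤ snorm X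
  snorm_triangle : ∀ X Y, snorm (X + Y) ≤ snorm X + snorm Y
  snorm_symm : ∀ (A C X : H →L[ℂ] H), mem X → snorm (A * X * C) ≤ ‖A‖ * snorm X * ‖C‖
  opNorm_le_snorm : ∀ {X}, mem X → ‖X‖ ≤ snorm X

/-- `P` is the orthogonal projection onto the subspace `M`. -/
def IsOrthoProjOnto (P : H →L[ℂ] H) (M : Submodule ℂ H) : Prop :=
  IsSelfAdjoint P ∧ P * P = P ∧ LinearMap.range (P : H →ₗ[ℂ] H) = M

/-!
Every two-sided ideal of `B(H)` is closed under adjoints: if `T = V |T|` is the polar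
decomposition, then `T* = V* T V*`, where `V*` is obtained by extending `T x ↦ |T| x` from the
range of `T`. With `P = A A†` and `Q = B B†`, the product `(1 - Q) P = (1 - Q) (A - B) A†` lies in
`S`, and so does `(1 - P) Q`; hence so does `P - Q = ((1 - Q) P)* - (1 - P) Q`. The kernel
projections `1 - A† A` are handled in the same way, using `A† (A - B) (1 - B† B) = A† A (1 - B† B)`,
and finally `A† - B† = A† (P - Q) - ((1 - A† A) - (1 - B† B)) B† - A† (A - B) B†`.
-/
namespace ContinuousLinearMap

variable {𝕜 E F G : Type*} [RCLike 𝕜]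

theorem norm_apply_eq_of_adjoint_comp_self_eq [NormedAddCommGroup E] [InnerProductSpace 𝕜 E]
    [CompleteSpace E] [NormedAddCommGroup F] [InnerProductSpace 𝕜 F] [CompleteSpace F]
    [NormedAddCommGroup G] [InnerProductSpace 𝕜 G] [CompleteSpace G]
    {R : E →L[𝕜] F} {T : E →L[𝕜] G} (h : adjoint R ∘L R = adjoint T ∘L T) (x : E) :
    ‖R x‖ = ‖T x‖ := by
  refine (pow_left_inj₀ (norm_nonneg _) (norm_nonneg _) two_ne_zero).mp ?_
  rw [apply_norm_sq_eq_inner_adjoint_left, apply_norm_sq_eq_inner_adjoint_left, h]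

theorem eq_of_eqOn_of_eqOn_orthogonal [NormedAddCommGroup E] [InnerProductSpace 𝕜 E]
    [CompleteSpace E] [NormedAddCommGroup F] [NormedSpace 𝕜 F] {f g : E →L[𝕜] F}
    (K : Submodule 𝕜 E) (hK : ∀ x ∈ K, f x = g x) (hKperp : ∀ x ∈ Kᗮ, f x = g x) : f = g := by
  let L : Submodule 𝕜 E := LinearMap.ker ((f - g : E →L[𝕜] F) : E →ₗ[𝕜] F)
  have hL : IsClosed (L : Set E) := (f - g).isClosed_ker
  have hKL : Kᗮᗮ ≤ L := by
    rw [Submodule.orthogonal_orthogonal_eq_closure]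
    exact K.topologicalClosure_minimal (fun x hx ↦ sub_eq_zero.mpr (hK x hx)) hL
  have hKperpL : Kᗮ ≤ L := fun x hx ↦ sub_eq_zero.mpr (hKperp x hx)
  have hLtop : L = ⊤ := by
    rw [eq_top_iff, ← Submodule.sup_orthogonal_of_hasOrthogonalProjection (K := Kᗮ)]
    exact sup_le hKperpL hKL
  ext x
  exact sub_eq_zero.mp (show x ∈ L from hLtop ▸ Submodule.mem_top)

theorem exists_comp_eq_of_norm_apply_le [NormedAddCommGroup E] [NormedSpace 𝕜 E]
    [NormedAddCommGroup F] [InnerProductSpace 𝕜 F] [CompleteSpace F]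
    [NormedAddCommGroup G] [NormedSpace 𝕜 G] [CompleteSpace G]
    (T : E →L[𝕜] F) (R : E →L[𝕜] G) (h : ∀ x, ‖R x‖ ≤ ‖T x‖) :
    ∃ W : F →L[𝕜] G, W ∘L T = R ∧ ∀ z ∈ T.rangeᗮ, W z = 0 := by
  set K := T.range.topologicalClosure
  let e : E →ₗ[𝕜] K := (T : E →ₗ[𝕜] F).codRestrict K
    fun x ↦ T.range.le_topologicalClosure (LinearMap.mem_range_self (T : E →ₗ[𝕜] F) x)
  have he : DenseRange e := by
    rw [DenseRange, Subtype.dense_iff, ← Set.range_comp]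
    exact (Submodule.topologicalClosure_coe _).le
  have hRe : ∀ x, ‖(R : E →ₗ[𝕜] G) x‖ ≤ 1 * ‖e x‖ := fun x ↦ (one_mul ‖T x‖).symm ▸ h x
  refine ⟨(LinearMap.extendOfNorm (R : E →ₗ[𝕜] G) e) ∘L K.orthogonalProjectionOnto, ?_, ?_⟩
  · ext x
    have : K.orthogonalProjectionOnto (T x) = e x :=
      Submodule.orthogonalProjectionOnto_mem_subspace_eq_self (K := K) (e x)
    simp [this, LinearMap.extendOfNorm_eq he ⟨1, hRe⟩]
  · intro z hz
    rw [← Submodule.orthogonal_closure] at hz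
    rw [comp_apply, Submodule.orthogonalProjectionOnto_eq_zero_iff.mpr hz, map_zero]

theorem exists_adjoint_eq_mul_mul (T : H →L[ℂ] H) : ∃ W : H →L[ℂ] H, adjoint T = W * T * W := by
  have hTT : 0 ≤ adjoint T * T := by simpa [star_eq_adjoint] using star_mul_self_nonneg T
  set R := CFC.sqrt (adjoint T * T)
  have hRR : R * R = adjoint T * T := CFC.sqrt_mul_sqrt_self _ hTT
  have hRsa : adjoint R = R := by
    rw [← star_eq_adjoint]; exact (CFC.sqrt_nonneg _).isSelfAdjoint.star_eq
  have hnorm : ∀ x, ‖R x‖ = ‖T x‖ := norm_apply_eq_of_adjoint_comp_self_eq (by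
    rw [hRsa]; exact hRR)
  obtain ⟨W, hWT, hW0⟩ := T.exists_comp_eq_of_norm_apply_le R fun x ↦ (hnorm x).le
  have hadj : adjoint T = R * W := by
    refine eq_of_eqOn_of_eqOn_orthogonal T.range ?_ fun z hz ↦ ?_
    · rintro _ ⟨x, rfl⟩
      change (adjoint T * T) x = R ((W ∘L T) x)
      rw [hWT, ← hRR]; rfl
    · have hTz : adjoint T z = 0 := by rw [T.orthogonal_range] at hz; exact hz
      change adjoint T z = R (W z)
      rw [hTz, hW0 z hz, map_zero]
  exact ⟨W, by rw [hadj, ← hWT]; rfl⟩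

end ContinuousLinearMap

namespace SymmIdeal

variable (S : SymmIdeal H)

theorem sub_mem {X Y : H →L[ℂ] H} (hX : S.mem X) (hY : S.mem Y) : S.mem (X - Y) :=
  sub_eq_add_neg X Y ▸ S.add_mem hX (S.neg_mem hY)

theorem mem_sub_comm {X Y : H →L[ℂ] H} : S.mem (X - Y) ↔ S.mem (Y - X) :=
  ⟨fun h ↦ neg_sub X Y ▸ S.neg_mem h, fun h ↦ neg_sub Y X ▸ S.neg_mem h⟩

theorem star_mem {X : H →L[ℂ] H} (h : S.mem X) : S.mem (star X) := by
  obtain ⟨W, hW⟩ := X.exists_adjoint_eq_mul_mul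
  rw [star_eq_adjoint, hW]
  exact S.mul_mem_right W (S.mul_mem_left W h)

theorem sub_mem_of_isSelfAdjoint {P Q : H →L[ℂ] H} (hP : IsSelfAdjoint P) (hQ : IsSelfAdjoint Q)
    (hQP : S.mem ((1 - Q) * P)) (hPQ : S.mem ((1 - P) * Q)) : S.mem (P - Q) := by
  have hstar : star ((1 - Q) * P) = P * (1 - Q) := by
    rw [star_mul, hP.star_eq, ((IsSelfAdjoint.one _).sub hQ).star_eq]
  have hsplit : P - Q = P * (1 - Q) - (1 - P) * Q := by noncomm_ring
  rw [hsplit, ← hstar]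
  exact S.sub_mem (S.star_mem hQP) hPQ

theorem one_sub_mul_mul_mem {A B A' B' : H →L[ℂ] H} (hB : B * B' * B = B) (h : S.mem (A - B)) :
    S.mem ((1 - B * B') * (A * A')) := by
  have hann : (1 - B * B') * B = 0 := by rw [sub_mul, one_mul, hB, sub_self]
  have : (1 - B * B') * (A - B) * A' = (1 - B * B') * (A * A') := by
    rw [mul_sub, hann, sub_zero, mul_assoc]
  exact this ▸ S.mul_mem_right A' (S.mul_mem_left _ h)

theorem mul_mul_one_sub_mem {A B A' B' : H →L[ℂ] H} (hB : B * B' * B = B) (h : S.mem (A - B)) :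
    S.mem (A' * A * (1 - B' * B)) := by
  have hann : B * (1 - B' * B) = 0 := by rw [mul_sub, mul_one, ← mul_assoc, hB, sub_self]
  have : A' * (A - B) * (1 - B' * B) = A' * A * (1 - B' * B) := by
    rw [mul_assoc, mul_assoc, sub_mul, hann, sub_zero]
  exact this ▸ S.mul_mem_right _ (S.mul_mem_left A' h)

end SymmIdeal

namespace IsMP

variable {A B A' B' : H →L[ℂ] H}

theorem isOrthoProjOnto_range (hA : IsMP A A') :
    IsOrthoProjOnto (A * A') (LinearMap.range (A : H →ₗ[ℂ] H)) := by
  refine ⟨hA.2.2.1, by rw [← mul_assoc, hA.1], le_antisymm ?_ ?_⟩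
  · rintro _ ⟨x, rfl⟩
    exact ⟨A' x, rfl⟩
  · rintro _ ⟨x, rfl⟩
    exact ⟨A x, congr($(hA.1) x)⟩

theorem isOrthoProjOnto_ker (hA : IsMP A A') :
    IsOrthoProjOnto (1 - A' * A) (LinearMap.ker (A : H →ₗ[ℂ] H)) := by
  have hidem : A' * A * (A' * A) = A' * A := by rw [← mul_assoc, hA.2.1]
  have hsq : (1 - A' * A) * (1 - A' * A) = 1 - A' * A - (A' * A - A' * A * (A' * A)) := by
    noncomm_ring
  have hann : A * (1 - A' * A) = 0 := by rw [mul_sub, mul_one, ← mul_assoc, hA.1, sub_self]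
  refine ⟨(IsSelfAdjoint.one _).sub hA.2.2.2, by rw [hsq, hidem, sub_self, sub_zero],
    le_antisymm ?_ fun x hx ↦ ⟨x, ?_⟩⟩
  · rintro _ ⟨x, rfl⟩
    exact congr($hann x)
  · have hAx : A x = 0 := hx
    change x - A' (A x) = x
    rw [hAx, map_zero, sub_zero]

theorem range_proj_sub_mem (S : SymmIdeal H) (hA : IsMP A A') (hB : IsMP B B')
    (h : S.mem (A - B)) : S.mem (A * A' - B * B') :=
  S.sub_mem_of_isSelfAdjoint hA.2.2.1 hB.2.2.1 (S.one_sub_mul_mul_mem hB.1 h)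
    (S.one_sub_mul_mul_mem hA.1 (S.mem_sub_comm.mp h))

theorem ker_proj_sub_mem (S : SymmIdeal H) (hA : IsMP A A') (hB : IsMP B B')
    (h : S.mem (A - B)) : S.mem ((1 - A' * A) - (1 - B' * B)) := by
  refine S.sub_mem_of_isSelfAdjoint ((IsSelfAdjoint.one _).sub hA.2.2.2)
    ((IsSelfAdjoint.one _).sub hB.2.2.2) ?_ ?_ <;> rw [sub_sub_cancel]
  · exact S.mul_mul_one_sub_mem hA.1 (S.mem_sub_comm.mp h)
  · exact S.mul_mul_one_sub_mem hB.1 h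

theorem sub_mem_of_sub_mem (S : SymmIdeal H) (hA : IsMP A A') (hB : IsMP B B')
    (h : S.mem (A - B)) : S.mem (A' - B') := by
  have hsplit : A' - B' = A' * (A * A' - B * B') - ((1 - A' * A) - (1 - B' * B)) * B'
      - A' * (A - B) * B' :=
    calc A' - B' = A' * A * A' - B' * B * B' := by rw [hA.2.1, hB.2.1]
      _ = _ := by noncomm_ring
  rw [hsplit]
  exact S.sub_mem (S.sub_mem (S.mul_mem_left A' (range_proj_sub_mem S hA hB h))
    (S.mul_mem_right B' (ker_proj_sub_mem S hA hB h))) (S.mul_mem_right B' (S.mul_mem_left A' h))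

end IsMP

theorem IsOrthoProjOnto.unique {P Q : H →L[ℂ] H} {M : Submodule ℂ H} (hP : IsOrthoProjOnto P M)
    (hQ : IsOrthoProjOnto Q M) : P = Q := by
  obtain ⟨_, hP'⟩ := isStarProjection_iff_eq_starProjection_range.mp ⟨hP.2.1, hP.1⟩
  obtain ⟨_, hQ'⟩ := isStarProjection_iff_eq_starProjection_range.mp ⟨hQ.2.1, hQ.1⟩
  have hPQ : P.range = Q.range := hP.2.2.trans hQ.2.2.symm
  rw [hP', hQ']
  congr 1

theorem mp_and_projections_mem_ideal_general (S : SymmIdeal H) (A B Adag Bdag : H →L[ℂ] H)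
    (hA : IsMP A Adag) (hB : IsMP B Bdag)
    (hmem : S.mem (A - B))
    (PrA PrB PkA PkB : H →L[ℂ] H)
    (hPrA : IsOrthoProjOnto PrA (LinearMap.range (A : H →ₗ[ℂ] H)))
    (hPrB : IsOrthoProjOnto PrB (LinearMap.range (B : H →ₗ[ℂ] H)))
    (hPkA : IsOrthoProjOnto PkA (LinearMap.ker (A : H →ₗ[ℂ] H)))
    (hPkB : IsOrthoProjOnto PkB (LinearMap.ker (B : H →ₗ[ℂ] H))) :
    S.mem (Adag - Bdag) ∧ S.mem (PrA - PrB) ∧ S.mem (PkA - PkB) := by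
  rw [hPrA.unique hA.isOrthoProjOnto_range, hPrB.unique hB.isOrthoProjOnto_range,
    hPkA.unique hA.isOrthoProjOnto_ker, hPkB.unique hB.isOrthoProjOnto_ker]
  exact ⟨hA.sub_mem_of_sub_mem S hB hmem, hA.range_proj_sub_mem S hB hmem,
    hA.ker_proj_sub_mem S hB hmem⟩

theorem mp_and_projections_mem_ideal (S : SymmIdeal H) (A B Adag Bdag : H →L[ℂ] H)
    (hAcr : IsClosed (LinearMap.range (A : H →ₗ[ℂ] H) : Set H))
    (hBcr : IsClosed (LinearMap.range (B : H →ₗ[ℂ] H) : Set H))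
    (hA : IsMP A Adag) (hB : IsMP B Bdag)
    (hmem : S.mem (A - B))
    (PrA PrB PkA PkB : H →L[ℂ] H)
    (hPrA : IsOrthoProjOnto PrA (LinearMap.range (A : H →ₗ[ℂ] H)))
    (hPrB : IsOrthoProjOnto PrB (LinearMap.range (B : H →ₗ[ℂ] H)))
    (hPkA : IsOrthoProjOnto PkA (LinearMap.ker (A : H →ₗ[ℂ] H)))
    (hPkB : IsOrthoProjOnto PkB (LinearMap.ker (B : H →ₗ[ℂ] H))) :
    S.mem (Adag - Bdag) ∧ S.mem (PrA - PrB) ∧ S.mem (PkA - PkB) :=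
  mp_and_projections_mem_ideal_general S A B Adag Bdag hA hB hmem PrA PrB PkA PkB hPrA hPrB hPkA
    hPkB
end
end

section
/- Let S be a symmetrically-normed ideal, B a closed range operator, and (B_n) closed range operators with B_n − B ∈ S and ‖B_n − B‖_S → 0. If sup_n ‖B_n†‖ < ∞, then ‖B_n† − B†‖_S → 0. -/
/-!
Wedin's formula writes `x - a`, for Moore-Penrose pairs `(X, x)` and `(A, a)`, as
`-x (X - A) a + x x* (X - A)* (1 - A a) + (1 - x X) (X - A)* a* a`. The factors `1 - A a` and
`1 - x X` are orthogonal projections, so every term is an ideal element `X - A` or `(X - A)*`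
between operators of norm at most `‖x‖ ‖a‖`, `‖x‖²` or `‖a‖²`. The ideal need not be closed
under adjoints; instead, the polar decomposition `K = U |K|` gives `K* = U* K U*` with
`‖U*‖ ≤ 1`, hence `‖Y K* Z‖_S ≤ ‖Y‖ ‖K‖_S ‖Z‖`. Thus `‖B_n† - B†‖_S ≤ C ‖B_n - B‖_S` with `C`
depending only on the bound for `‖B_n†‖` and on `‖B†‖`.
-/

open ContinuousLinearMap Filter MeasureTheory
open scoped InnerProductSpace

noncomputable section

variable {H : Type*} [NormedAddCommGroup H] [InnerProductSpace ℂ H] [CompleteSpace H]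

theorem exists_partialIsometry_comp_eq {𝕜 E F G : Type*} [RCLike 𝕜]
    [NormedAddCommGroup E] [InnerProductSpace 𝕜 E]
    [NormedAddCommGroup F] [InnerProductSpace 𝕜 F] [CompleteSpace F]
    [NormedAddCommGroup G] [InnerProductSpace 𝕜 G] [CompleteSpace G]
    (R : E →L[𝕜] F) (K : E →L[𝕜] G) (h : ∀ x y, ⟪K x, K y⟫_𝕜 = ⟪R x, R y⟫_𝕜) :
    ∃ U : F →L[𝕜] G, ‖U‖ ≤ 1 ∧ U ∘L R = K ∧ adjoint U ∘L K = R := by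
  -- `U` extends `R x ↦ K x` to the closure of the range of `R` and vanishes on its complement.
  set T := (LinearMap.range (R : E →ₗ[𝕜] F)).topologicalClosure
  have hRT : ∀ x, R x ∈ T := fun x =>
    (LinearMap.range (R : E →ₗ[𝕜] F)).le_topologicalClosure ⟨x, rfl⟩
  let Rt : E →ₗ[𝕜] T := (R : E →ₗ[𝕜] F).codRestrict T hRT
  have hdense : DenseRange Rt := by
    rw [DenseRange, Subtype.dense_iff, ← Set.range_comp]
    exact (Submodule.topologicalClosure_coe _).le
  have hbound : ∀ x, ‖K x‖ ≤ 1 * ‖Rt x‖ := fun x => by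
    rw [one_mul, norm_eq_sqrt_re_inner (𝕜 := 𝕜), h x x, ← norm_eq_sqrt_re_inner]; rfl
  set U₀ : T →L[𝕜] G := (K : E →ₗ[𝕜] G).extendOfNorm Rt
  have hU₀R : ∀ x, U₀ (Rt x) = K x := LinearMap.extendOfNorm_eq hdense ⟨1, hbound⟩
  have hU₀inner : ∀ x (t : T), ⟪K x, U₀ t⟫_𝕜 = ⟪R x, (t : F)⟫_𝕜 := by
    intro x t
    refine hdense.induction_on t (isClosed_eq (by fun_prop) (by fun_prop)) fun z => ?_
    rw [hU₀R]
    exact h x z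
  set P := T.orthogonalProjectionOnto
  refine ⟨U₀ ∘L (P : F →L[𝕜] T), ?_, ?_, ?_⟩
  · calc ‖U₀ ∘L (P : F →L[𝕜] T)‖ ≤ ‖U₀‖ * ‖(P : F →L[𝕜] T)‖ := opNorm_comp_le _ _
      _ ≤ 1 * 1 := by
        gcongr
        · exact LinearMap.opNorm_extendOfNorm_le hdense zero_le_one hbound
        · exact T.orthogonalProjectionOnto_norm_le
      _ = 1 := one_mul 1
  · ext x
    simp only [comp_apply, P, T.orthogonalProjectionOnto_mem_subspace_eq_self ⟨R x, hRT x⟩]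
    exact hU₀R x
  · ext x
    refine ext_inner_right 𝕜 fun y => ?_
    simp only [adjoint_comp, comp_apply, adjoint_inner_left, hU₀inner]
    exact T.inner_orthogonalProjectionOnto_eq_of_mem_left ⟨R x, hRT x⟩ y

theorem exists_norm_le_one_mul_mul_eq_star (K : H →L[ℂ] H) :
    ∃ V : H →L[ℂ] H, ‖V‖ ≤ 1 ∧ V * K * V = star K := by
  -- `V = U*` for the polar decomposition `K = U |K|`.
  set R := CFC.sqrt (star K * K)
  have hR : IsSelfAdjoint R := .of_nonneg (CFC.sqrt_nonneg _)
  have hRR : star R * R = star K * K := by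
    rw [hR.star_eq]
    exact CFC.sqrt_mul_sqrt_self _ (star_mul_self_nonneg K)
  have hinner : ∀ x y, ⟪K x, K y⟫_ℂ = ⟪R x, R y⟫_ℂ := fun x y => by
    simpa [star_eq_adjoint, adjoint_inner_right] using congr(⟪x, $hRR.symm y⟫_ℂ)
  obtain ⟨U, hU, hUR, hUK⟩ := exists_partialIsometry_comp_eq R K hinner
  refine ⟨star U, by rwa [norm_star], ?_⟩
  calc star U * K * star U = R * star U := by rw [star_eq_adjoint U, ← hUK]; rfl
    _ = star (U * R) := by rw [star_mul, hR.star_eq]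
    _ = star K := by rw [← hUR]; rfl

theorem IsMP.isStarProjection_mul {A B : H →L[ℂ] H} (h : IsMP A B) : IsStarProjection (A * B) :=
  ⟨by rw [IsIdempotentElem, ← mul_assoc, h.1], h.2.2.1⟩

theorem IsMP.isStarProjection_mul_rev {A B : H →L[ℂ] H} (h : IsMP A B) :
    IsStarProjection (B * A) :=
  ⟨by rw [IsIdempotentElem, ← mul_assoc, h.2.1], h.2.2.2⟩

theorem sub_eq_wedin {R : Type*} [Ring R] [StarRing R] {X A x a : R}
    (h1 : X * x * X = X) (h2 : x * X * x = x) (h3 : IsSelfAdjoint (X * x))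
    (h4 : IsSelfAdjoint (x * X)) (h5 : A * a * A = A) (h6 : a * A * a = a)
    (h7 : IsSelfAdjoint (A * a)) (h8 : IsSelfAdjoint (a * A)) :
    x - a = -x * (X - A) * a + x * star x * star (X - A) * (1 - A * a)
      + (1 - x * X) * star (X - A) * (star a * a) := by
  have e1 : star A * (A * a) = star A := by rw [← h7.star_eq, ← star_mul, h5]
  have e2 : x * star x * star X = x := by
    rw [mul_assoc, ← star_mul, h3.star_eq, ← mul_assoc, h2]
  have e3 : x * X * star X = star X := by
    rw [← h4.star_eq, ← star_mul, ← mul_assoc, h1]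
  have e4 : star A * (star a * a) = a := by rw [← mul_assoc, ← star_mul, h8.star_eq, h6]
  have t2 : x * star x * star (X - A) * (1 - A * a) = x - x * (A * a) := by
    simp only [star_sub, mul_sub, sub_mul, mul_one, e2, mul_assoc (x * star x), e1]
    abel
  have t3 : (1 - x * X) * star (X - A) * (star a * a) = -a + x * X * a := by
    simp only [star_sub, mul_sub, sub_mul, one_mul, e3, e4, mul_assoc (x * X)]
    abel
  rw [t2, t3]
  noncomm_ring

namespace SymmIdeal

variable (S : SymmIdeal H)

theorem snorm_mul_star_mul_le (A C : H →L[ℂ] H) {K : H →L[ℂ] H} (hK : S.mem K) :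
    S.snorm (A * star K * C) ≤ ‖A‖ * S.snorm K * ‖C‖ := by
  obtain ⟨V, hV, hVK⟩ := exists_norm_le_one_mul_mul_eq_star K
  have hs := S.snorm_nonneg K
  calc S.snorm (A * star K * C) = S.snorm (A * V * K * (V * C)) := by
        rw [← hVK]; simp only [mul_assoc]
    _ ≤ ‖A * V‖ * S.snorm K * ‖V * C‖ := S.snorm_symm _ _ _ hK
    _ ≤ (‖A‖ * 1) * S.snorm K * (1 * ‖C‖) := by
        gcongr
        · exact norm_mul_le_of_le le_rfl hV
        · exact norm_mul_le_of_le hV le_rfl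
    _ = ‖A‖ * S.snorm K * ‖C‖ := by ring

theorem snorm_sub_le_of_isMP {X x A a : H →L[ℂ] H} (hX : IsMP X x) (hA : IsMP A a)
    (hK : S.mem (X - A)) :
    S.snorm (x - a) ≤ (‖x‖ * ‖a‖ + ‖x‖ ^ 2 + ‖a‖ ^ 2) * S.snorm (X - A) := by
  have hs := S.snorm_nonneg (X - A)
  rw [sub_eq_wedin hX.1 hX.2.1 hX.2.2.1 hX.2.2.2 hA.1 hA.2.1 hA.2.2.1 hA.2.2.2]
  calc _ ≤ S.snorm (-x * (X - A) * a) + S.snorm (x * star x * star (X - A) * (1 - A * a))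
          + S.snorm ((1 - x * X) * star (X - A) * (star a * a)) :=
        (S.snorm_triangle _ _).trans (add_le_add_left (S.snorm_triangle _ _) _)
    _ ≤ ‖-x‖ * S.snorm (X - A) * ‖a‖
          + ‖x * star x‖ * S.snorm (X - A) * ‖1 - A * a‖
          + ‖1 - x * X‖ * S.snorm (X - A) * ‖star a * a‖ :=
        add_le_add_three (S.snorm_symm _ _ _ hK) (S.snorm_mul_star_mul_le _ _ hK)
          (S.snorm_mul_star_mul_le _ _ hK)
    _ ≤ ‖x‖ * S.snorm (X - A) * ‖a‖ + ‖x‖ ^ 2 * S.snorm (X - A) * 1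
          + 1 * S.snorm (X - A) * ‖a‖ ^ 2 := by
        rw [norm_neg, CStarRing.norm_self_mul_star, CStarRing.norm_star_mul_self, ← sq, ← sq]
        gcongr
        · exact hA.isStarProjection_mul.one_sub.norm_le
        · exact hX.isStarProjection_mul_rev.one_sub.norm_le
    _ = _ := by ring

end SymmIdeal

theorem mp_continuity_of_bounded_daggers_general (S : SymmIdeal H)
    (B : H →L[ℂ] H) (Bseq : ℕ → H →L[ℂ] H)
    (Bdag : H →L[ℂ] H) (Bseqdag : ℕ → H →L[ℂ] H)
    (hB : IsMP B Bdag) (hBn : ∀ n, IsMP (Bseq n) (Bseqdag n))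
    (hmem : ∀ n, S.mem (Bseq n - B))
    (hconv : Filter.Tendsto (fun n => S.snorm (Bseq n - B)) Filter.atTop (nhds 0))
    (hbdd : ∃ M : ℝ, ∀ n, ‖Bseqdag n‖ ≤ M) :
    Filter.Tendsto (fun n => S.snorm (Bseqdag n - Bdag)) Filter.atTop (nhds 0) := by
  obtain ⟨M, hM⟩ := hbdd
  have hbound : ∀ n, S.snorm (Bseqdag n - Bdag)
      ≤ (M * ‖Bdag‖ + M ^ 2 + ‖Bdag‖ ^ 2) * S.snorm (Bseq n - B) := fun n =>
    (S.snorm_sub_le_of_isMP (hBn n) hB (hmem n)).trans <| by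
      have := S.snorm_nonneg (Bseq n - B)
      gcongr
      exacts [hM n, hM n]
  have hlim := hconv.const_mul (M * ‖Bdag‖ + M ^ 2 + ‖Bdag‖ ^ 2)
  rw [mul_zero] at hlim
  exact squeeze_zero (fun n => S.snorm_nonneg _) hbound hlim

theorem mp_continuity_of_bounded_daggers (S : SymmIdeal H)
    (B : H →L[ℂ] H) (Bseq : ℕ → H →L[ℂ] H)
    (Bdag : H →L[ℂ] H) (Bseqdag : ℕ → H →L[ℂ] H)
    (hBcr : IsClosed (LinearMap.range (B : H →ₗ[ℂ] H) : Set H))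
    (hBncr : ∀ n, IsClosed (LinearMap.range (Bseq n : H →ₗ[ℂ] H) : Set H))
    (hB : IsMP B Bdag) (hBn : ∀ n, IsMP (Bseq n) (Bseqdag n))
    (hmem : ∀ n, S.mem (Bseq n - B))
    (hconv : Filter.Tendsto (fun n => S.snorm (Bseq n - B)) Filter.atTop (nhds 0))
    (hbdd : ∃ M : ℝ, ∀ n, ‖Bseqdag n‖ ≤ M) :
    Filter.Tendsto (fun n => S.snorm (Bseqdag n - Bdag)) Filter.atTop (nhds 0) :=
  mp_continuity_of_bounded_daggers_general S B Bseq Bdag Bseqdag hB hBn hmem hconv hbdd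
end
end
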